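/- For any two nonzero vectors x, y ∈ F₂^{2m} with m ≥ 1, there exists a product of at most two symplectic transvections mapping x to y. -/
import Mathlib


open Matrix

/-- The binary symplectic form `Ω = [[0, I_m],[I_m, 0]]` on `𝔽₂^{2m} = 𝔽₂^m ⊕ 𝔽₂^m`. -/
def Omg (m : ℕ) : Matrix (Fin m ⊕ Fin m) (Fin m ⊕ Fin m) (ZMod 2) :=
  Matrix.fromBlocks 0 1 1 0

/-- The symplectic inner product `⟨x,y⟩ = x Ω yᵀ` on `𝔽₂^{2m}`. -/
def sympInner (m : ℕ) (x y : Fin m ⊕ Fin m → ZMod 2) : ZMod 2 :=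
  x ⬝ᵥ (Omg m) *ᵥ y

/-- The symplectic transvection matrix `F_h = I_{2m} + Ω hᵀ h`. -/
def transvection (m : ℕ) (h : Fin m ⊕ Fin m → ZMod 2) :
    Matrix (Fin m ⊕ Fin m) (Fin m ⊕ Fin m) (ZMod 2) :=
  1 + Matrix.of fun i j => ((Omg m) *ᵥ h) i * h j

lemma omg_mulVec (m : ℕ) (x : Fin m ⊕ Fin m → ZMod 2) :
    Omg m *ᵥ x = x ∘ Sum.swap := by
  funext i
  cases i with
  | inl a => simp [Omg, mulVec, dotProduct, Fintype.sum_sum_type, Matrix.fromBlocks,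
      Matrix.one_apply, Finset.sum_ite_eq']
  | inr a => simp [Omg, mulVec, dotProduct, Fintype.sum_sum_type, Matrix.fromBlocks,
      Matrix.one_apply, Finset.sum_ite_eq']

lemma sympInner_eq (m : ℕ) (x y : Fin m ⊕ Fin m → ZMod 2) :
    sympInner m x y = ∑ i, x i * y (Sum.swap i) := by
  simp [sympInner, omg_mulVec, dotProduct]

lemma sympInner_symm (m : ℕ) (x y : Fin m ⊕ Fin m → ZMod 2) :
    sympInner m x y = sympInner m y x := by
  rw [sympInner_eq, sympInner_eq]
  rw [← Equiv.sum_comp (Equiv.sumComm (Fin m) (Fin m)) (fun i => y i * x (Sum.swap i))]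
  simp [mul_comm]

lemma sympInner_self (m : ℕ) (x : Fin m ⊕ Fin m → ZMod 2) :
    sympInner m x x = 0 := by
  rw [sympInner_eq, Fintype.sum_sum_type]
  have h2 : ∀ a b : ZMod 2, a * b + b * a = 0 := by decide
  simp only [Sum.swap_inl, Sum.swap_inr]
  rw [← Finset.sum_add_distrib]
  simp [h2]

lemma vecMul_transvection (m : ℕ) (x h : Fin m ⊕ Fin m → ZMod 2) :
    Matrix.vecMul x (transvection m h) = x + (sympInner m x h) • h := by
  funext j
  simp only [_root_.transvection, vecMul, dotProduct, Matrix.add_apply, Matrix.of_apply,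
    Pi.add_apply, Pi.smul_apply, smul_eq_mul, sympInner]
  simp only [mul_add]
  rw [Finset.sum_add_distrib]
  congr 1
  · simp [Matrix.one_apply, Finset.sum_ite_eq', mul_comm]
  · rw [Finset.sum_mul]
    congr 1; funext i; ring

lemma sympInner_add_right (m : ℕ) (x a b : Fin m ⊕ Fin m → ZMod 2) :
    sympInner m x (a + b) = sympInner m x a + sympInner m x b := by
  simp [sympInner, mulVec_add, dotProduct_add]

lemma exists_one (m : ℕ) (x : Fin m ⊕ Fin m → ZMod 2) (hx : x ≠ 0) :
    ∃ z, sympInner m x z = 1 := by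
  obtain ⟨i, hi⟩ := Function.ne_iff.mp hx
  refine ⟨Pi.single (Sum.swap i) 1, ?_⟩
  have h1 : ∀ a : ZMod 2, a ≠ 0 → a = 1 := by decide
  rw [sympInner_eq]
  rw [Finset.sum_eq_single i]
  · rw [Pi.single_eq_same, mul_one]
    exact h1 _ hi
  · intro b _ hb
    rw [Pi.single_eq_of_ne (fun hc => hb (by simpa using congrArg Sum.swap hc)), mul_zero]
  · simp

lemma add_add_cancel' (m : ℕ) (a b : Fin m ⊕ Fin m → ZMod 2) : a + (a + b) = b := by
  funext j
  have : ∀ p q : ZMod 2, p + (p + q) = q := by decide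
  simpa using this (a j) (b j)

/-- Any two nonzero vectors of `𝔽₂^{2m}` (`m ≥ 1`) are related by a product of at most two
symplectic transvections (`h = 0` gives the identity, so this encodes "at most two"). -/
theorem exists_two_transvections_mapping (m : ℕ) (hm : 1 ≤ m)
    (x y : Fin m ⊕ Fin m → ZMod 2) (hx : x ≠ 0) (hy : y ≠ 0) :
    ∃ h₁ h₂ : Fin m ⊕ Fin m → ZMod 2,
      Matrix.vecMul (Matrix.vecMul x (transvection m h₁)) (transvection m h₂) = y := by
  have hd : ∀ a : ZMod 2, a = 0 ∨ a = 1 := by decide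
  -- key step lemma: if ⟨u,v⟩ = 1 then transvection by u+v maps u to v
  have key : ∀ u v : Fin m ⊕ Fin m → ZMod 2, sympInner m u v = 1 →
      Matrix.vecMul u (transvection m (u + v)) = v := by
    intro u v huv
    rw [vecMul_transvection, sympInner_add_right, sympInner_self, huv, zero_add, one_smul,
      add_add_cancel']
  rcases hd (sympInner m x y) with h0 | h1
  · -- find z pairing to 1 with both x and y
    obtain ⟨z1, hz1⟩ := exists_one m x hx
    obtain ⟨z2, hz2⟩ := exists_one m y hy
    have : ∃ z, sympInner m x z = 1 ∧ sympInner m y z = 1 := by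
      rcases hd (sympInner m y z1) with hy1 | hy1
      · rcases hd (sympInner m x z2) with hx2 | hx2
        · exact ⟨z1 + z2, by rw [sympInner_add_right, hz1, hx2, add_zero],
            by rw [sympInner_add_right, hy1, hz2, zero_add]⟩
        · exact ⟨z2, hx2, hz2⟩
      · exact ⟨z1, hz1, hy1⟩
    obtain ⟨z, hxz, hyz⟩ := this
    refine ⟨x + z, z + y, ?_⟩
    rw [key x z hxz, key z y (by rw [sympInner_symm]; exact hyz)]
  · refine ⟨x + y, 0, ?_⟩
    rw [key x y h1, vecMul_transvection, smul_zero, add_zero]
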